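/- Let 0 < λ₀ < λ₁, let T ∈ (0, ∞], and let γ : [0,T) → [0,∞) be a continuous function such that γ(0) ≤ λ₀ and F(γ(t)) ≤ F(λ₀) for all t ∈ [0,T). Then γ(t) ≤ λ₀ for all t ∈ [0,T); in particular γ(t) < λ₁ for all t ∈ [0,T). -/

import Mathlib

/-!
`F' x = x (1 - Bᵏ xᵏ⁻²)` is positive on `(0, λ₁)`, since `λ₁` is exactly the point where
`Bᵏ λ₁ᵏ⁻² = 1`; so `F` is strictly increasing on `[0, λ₁]`. If `γ` ever exceeded `λ₀`, then by
the intermediate value theorem it would pass through some level `c ∈ (λ₀, λ₁]`, where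
`F c > F λ₀`, contradicting the energy bound.
-/

open ENNReal Set

lemma hasDerivAt_sq_div_two_sub_mul_rpow {k : ℝ} (hk : k ≠ 0) (a : ℝ) {x : ℝ} (hx : x ≠ 0) :
    HasDerivAt (fun x : ℝ => x ^ 2 / 2 - a / k * x ^ k) (x - a * x ^ (k - 1)) x := by
  have hsq : HasDerivAt (fun x : ℝ => x ^ 2 / 2) x x := by
    simpa using (hasDerivAt_pow 2 x).div_const 2
  have hrpow := (Real.hasDerivAt_rpow_const (p := k) (Or.inl hx)).const_mul (a / k)
  rw [← mul_assoc, div_mul_cancel₀ _ hk] at hrpow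
  exact hsq.sub hrpow

lemma strictMonoOn_sq_div_two_sub_mul_rpow {k a l : ℝ} (hk : 2 < k) (ha : 0 < a)
    (hl : a * l ^ (k - 2) ≤ 1) :
    StrictMonoOn (fun x : ℝ => x ^ 2 / 2 - a / k * x ^ k) (Icc 0 l) := by
  apply strictMonoOn_of_deriv_pos (convex_Icc 0 l)
  · exact (continuousOn_pow 2).div_const 2 |>.sub <| continuousOn_const.mul
      fun x _ => (Real.continuousAt_rpow_const x k (Or.inr (by linarith))).continuousWithinAt
  · intro x hx
    rw [interior_Icc] at hx
    have hx0 : 0 < x := hx.1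
    rw [(hasDerivAt_sq_div_two_sub_mul_rpow (by linarith) a hx0.ne').deriv]
    have hsplit : x ^ (k - 1) = x ^ (k - 2) * x := by
      rw [← Real.rpow_add_one hx0.ne']
      ring_nf
    have hsmall : a * x ^ (k - 2) < 1 :=
      (mul_lt_mul_of_pos_left (Real.rpow_lt_rpow hx0.le hx.2 (by linarith)) ha).trans_le hl
    rw [hsplit]
    nlinarith

lemma le_of_continuousOn_of_apply_le {F γ : ℝ → ℝ} {a t l₀ l₁ : ℝ} (hat : a ≤ t)
    (hγ : ContinuousOn γ (Icc a t)) (hF : StrictMonoOn F (Icc l₀ l₁)) (hl : l₀ < l₁)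
    (ha : γ a ≤ l₀) (hFγ : ∀ s ∈ Icc a t, F (γ s) ≤ F l₀) : γ t ≤ l₀ := by
  by_contra! ht
  set c := min (γ t) l₁
  have hc : l₀ < c := lt_min ht hl
  obtain ⟨s, hs, hγs⟩ :=
    intermediate_value_Icc hat hγ ⟨ha.trans hc.le, min_le_left _ _⟩
  have hFc : F l₀ < F c := hF ⟨le_rfl, hl.le⟩ ⟨hc.le, min_le_right _ _⟩ hc
  have := hFγ s hs
  rw [hγs] at this
  linarith

theorem stable_set_trapping_general
    (k B : ℝ) (hk : 2 < k) (hB : 0 < B)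
    (F : ℝ → ℝ) (hF : ∀ x, F x = x ^ 2 / 2 - B ^ k / k * x ^ k)
    (l1 l0 : ℝ) (hl1 : l1 = B ^ (-k / (k - 2)))
    (hl0_pos : 0 < l0) (hl0_lt : l0 < l1)
    (T : ℝ≥0∞)
    (γ : ℝ → ℝ)
    (hγ_cont : ContinuousOn γ {t : ℝ | 0 ≤ t ∧ ENNReal.ofReal t < T})
    (hγ_zero : γ 0 ≤ l0)
    (hγ_F : ∀ t : ℝ, 0 ≤ t → ENNReal.ofReal t < T → F (γ t) ≤ F l0) :
    ∀ t : ℝ, 0 ≤ t → ENNReal.ofReal t < T → γ t ≤ l0 ∧ γ t < l1 := by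
  intro t ht htT
  have hIcc : Icc 0 t ⊆ {s : ℝ | 0 ≤ s ∧ ENNReal.ofReal s < T} := fun s hs =>
    ⟨hs.1, (ENNReal.ofReal_le_ofReal hs.2).trans_lt htT⟩
  have hl1_crit : B ^ k * l1 ^ (k - 2) ≤ 1 := by
    rw [hl1, ← Real.rpow_mul hB.le, div_mul_cancel₀ _ (by linarith), ← Real.rpow_add hB,
      add_neg_cancel, Real.rpow_zero]
  have hmono : StrictMonoOn F (Icc 0 l1) := by
    rw [funext hF]
    exact strictMonoOn_sq_div_two_sub_mul_rpow hk (Real.rpow_pos_of_pos hB k) hl1_crit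
  have hle : γ t ≤ l0 :=
    le_of_continuousOn_of_apply_le ht (hγ_cont.mono hIcc)
      (hmono.mono (Icc_subset_Icc hl0_pos.le le_rfl)) hl0_lt hγ_zero
      fun s hs => hγ_F s hs.1 (hIcc hs).2
  exact ⟨hle, hle.trans_lt hl0_lt⟩

/-- Trapping argument for the stable set (Lemma 3.2): with `F x = x²/2 − (Bᵏ/k) xᵏ`,
`k > 2`, `B > 0`, `λ₁ = B^(−k/(k−2))`, `0 < λ₀ < λ₁`, `T ∈ (0,∞]`, and
`γ : [0,T) → [0,∞)` continuous with `γ(0) ≤ λ₀` and `F(γ(t)) ≤ F(λ₀)` on `[0,T)`,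
one has `γ(t) ≤ λ₀` (hence `γ(t) < λ₁`) for all `t ∈ [0,T)`. -/
theorem stable_set_trapping
    (k B : ℝ) (hk : 2 < k) (hB : 0 < B)
    (F : ℝ → ℝ) (hF : ∀ x, F x = x ^ 2 / 2 - B ^ k / k * x ^ k)
    (l1 l0 : ℝ) (hl1 : l1 = B ^ (-k / (k - 2)))
    (hl0_pos : 0 < l0) (hl0_lt : l0 < l1)
    (T : ℝ≥0∞) (hT : 0 < T)
    (γ : ℝ → ℝ)
    (hγ_cont : ContinuousOn γ {t : ℝ | 0 ≤ t ∧ ENNReal.ofReal t < T})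
    (hγ_nonneg : ∀ t : ℝ, 0 ≤ t → ENNReal.ofReal t < T → 0 ≤ γ t)
    (hγ_zero : γ 0 ≤ l0)
    (hγ_F : ∀ t : ℝ, 0 ≤ t → ENNReal.ofReal t < T → F (γ t) ≤ F l0) :
    ∀ t : ℝ, 0 ≤ t → ENNReal.ofReal t < T → γ t ≤ l0 ∧ γ t < l1 :=
  stable_set_trapping_general k B hk hB F hF l1 l0 hl1 hl0_pos hl0_lt T γ hγ_cont hγ_zero hγ_F
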